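/- Let (Ω, 𝒜, P) be a probability space with a filtration (ℱ_t)_{t ≥ 0}, and let f : ℝ^p → ℝ be differentiable, bounded below, with ∇f L-Lipschitz on ℝ^p. Let (θ_t)_{t ≥ 0} be an (ℱ_t)-adapted ℝ^p-valued process and (g_t)_{t ≥ 0} square-integrable ℝ^p-valued random vectors with g_t measurable with respect to ℱ_{t+1}, satisfying E[g_t ∣ ℱ_t] = ∇f(θ_t) and E[‖g_t − ∇f(θ_t)‖² ∣ ℱ_t] ≤ σ² almost surely, and let θ_{t+1} = θ_t − η_t g_t with deterministic stepsizes η_t > 0 satisfying Σ_t η_t = ∞ and Σ_t η_t² < ∞. Then liminf_{t → ∞} ‖∇f(θ_t)‖ = 0 almost surely. -/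

import Mathlib

open MeasureTheory Filter

lemma descent_lemma {E : Type*} [NormedAddCommGroup E] [InnerProductSpace ℝ E] [CompleteSpace E]
    (f : E → ℝ) (L : ℝ) (hL : 0 ≤ L) (hdiff : Differentiable ℝ f)
    (hlip : ∀ x y, ‖gradient f x - gradient f y‖ ≤ L * ‖x - y‖) (x y : E) :
    f y ≤ f x + inner ℝ (gradient f x) (y - x) + L / 2 * ‖y - x‖ ^ 2 := by
  set v := y - x with hv
  have hgradcont : Continuous (gradient f) := by
    have : LipschitzWith L.toNNReal (gradient f) := by
      apply LipschitzWith.of_dist_le_mul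
      intro a b
      rw [dist_eq_norm, dist_eq_norm]
      simpa [Real.coe_toNNReal L hL] using hlip a b
    exact this.continuous
  have hφd : ∀ s : ℝ, HasDerivAt (fun s : ℝ => f (x + s • v))
      (inner ℝ (gradient f (x + s • v)) v : ℝ) s := by
    intro s
    have h1 : HasDerivAt (fun s : ℝ => x + s • v) v s := by
      simpa using ((hasDerivAt_id s).smul_const v).const_add x
    have h2 : HasFDerivAt f (InnerProductSpace.toDual ℝ E (gradient f (x + s • v)))
        (x + s • v) := (hdiff _).hasGradientAt
    have := h2.comp_hasDerivAt s h1
    exact this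
  have hcont : Continuous fun s : ℝ => (inner ℝ (gradient f (x + s • v)) v : ℝ) := by
    exact (hgradcont.comp (by continuity)).inner continuous_const
  have key : f y - f x = ∫ s in (0:ℝ)..1, (inner ℝ (gradient f (x + s • v)) v : ℝ) := by
    have := intervalIntegral.integral_eq_sub_of_hasDerivAt (f := fun s : ℝ => f (x + s • v))
      (a := 0) (b := 1) (fun t _ => hφd t) (hcont.intervalIntegrable 0 1)
    rw [this]
    simp [hv]
  have hbound : ∀ s ∈ Set.Icc (0:ℝ) 1,
      (inner ℝ (gradient f (x + s • v)) v : ℝ) ≤ inner ℝ (gradient f x) v + L * ‖v‖ ^ 2 * s := by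
    intro s hs
    have h1 : (inner ℝ (gradient f (x + s • v)) v : ℝ)
        = inner ℝ (gradient f x) v + inner ℝ (gradient f (x + s • v) - gradient f x) v := by
      rw [inner_sub_left]; ring
    rw [h1]
    have h2 : (inner ℝ (gradient f (x + s • v) - gradient f x) v : ℝ)
        ≤ ‖gradient f (x + s • v) - gradient f x‖ * ‖v‖ := real_inner_le_norm _ _
    have h3 : ‖gradient f (x + s • v) - gradient f x‖ ≤ L * (s * ‖v‖) := by
      have := hlip (x + s • v) x
      simpa [norm_smul, abs_of_nonneg hs.1] using this
    nlinarith [norm_nonneg v, norm_nonneg (gradient f (x + s • v) - gradient f x), hs.1]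
  have hint : ∫ s in (0:ℝ)..1, (inner ℝ (gradient f (x + s • v)) v : ℝ)
      ≤ ∫ s in (0:ℝ)..1, (inner ℝ (gradient f x) v + L * ‖v‖ ^ 2 * s) := by
    apply intervalIntegral.integral_mono_on zero_le_one (hcont.intervalIntegrable 0 1)
    · exact (Continuous.intervalIntegrable (by continuity) 0 1)
    · exact hbound
  have hrhs : ∫ s in (0:ℝ)..1, (inner ℝ (gradient f x) v + L * ‖v‖ ^ 2 * s)
      = inner ℝ (gradient f x) v + L / 2 * ‖v‖ ^ 2 := by
    rw [intervalIntegral.integral_add (intervalIntegrable_const)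
      (Continuous.intervalIntegrable (by fun_prop) 0 1)]
    have h5 : ∫ s in (0:ℝ)..1, L * ‖v‖ ^ 2 * s = L * ‖v‖ ^ 2 * ∫ s in (0:ℝ)..1, s :=
      intervalIntegral.integral_const_mul _ _
    rw [h5, integral_id]
    simp
    ring
  rw [hrhs] at hint
  rw [← key] at hint
  linarith

lemma memℒp_two_condexp {α E : Type*} {m m0 : MeasurableSpace α} (hm : m ≤ m0) {μ : Measure α}
    [IsFiniteMeasure μ] [NormedAddCommGroup E] [InnerProductSpace ℝ E] [CompleteSpace E]
    {g : α → E} (hg : MemLp g 2 μ) : MemLp (μ[g|m]) 2 μ := by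
  haveI : SigmaFinite (μ.trim hm) := by infer_instance
  set G : Lp E 2 μ := hg.toLp g with hG
  have h1 : ((condExpL2 E ℝ hm G : Lp E 2 μ) : α → E) =ᵐ[μ] μ[g|m] := by
    refine ae_eq_condExp_of_forall_setIntegral_eq hm (hg.integrable one_le_two)
      (fun s _ hμs => integrableOn_condExpL2_of_measure_ne_top hm hμs.ne _)
      (fun s hs hμs => ?_) (aestronglyMeasurable_condExpL2 hm G)
    rw [integral_condExpL2_eq hm G hs hμs.ne]
    exact setIntegral_congr_ae (hm s hs) ((hg.coeFn_toLp).mono fun x hx _ => hx)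
  exact (Lp.memLp ((condExpL2 E ℝ hm G : Lp E 2 μ))).ae_eq h1

lemma condexp_comp_clm {α E F : Type*} {m m0 : MeasurableSpace α} (hm : m ≤ m0) {μ : Measure α}
    [IsFiniteMeasure μ] [NormedAddCommGroup E] [NormedSpace ℝ E] [CompleteSpace E]
    [NormedAddCommGroup F] [NormedSpace ℝ F] [CompleteSpace F]
    (T : E →L[ℝ] F) {g : α → E} (hg : Integrable g μ) :
    μ[fun ω => T (g ω)|m] =ᵐ[μ] fun ω => T ((μ[g|m]) ω) := by
  haveI : SigmaFinite (μ.trim hm) := by infer_instance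
  refine (ae_eq_condExp_of_forall_setIntegral_eq hm (T.integrable_comp hg)
    (fun s _ _ => (T.integrable_comp integrable_condExp).integrableOn)
    (fun s hs hμs => ?_)
    ((T.continuous.comp_stronglyMeasurable stronglyMeasurable_condExp).aestronglyMeasurable)).symm
  rw [ContinuousLinearMap.integral_comp_comm T integrable_condExp.integrableOn,
    ContinuousLinearMap.integral_comp_comm T hg.integrableOn,
    setIntegral_condExp hm hg hs]

lemma liminf_eq_zero_of_summable (a η : ℕ → ℝ) (ha : ∀ t, 0 ≤ a t) (hη : ∀ t, 0 < η t)
    (hdiv : Tendsto (fun T => ∑ t ∈ Finset.range T, η t) atTop atTop)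
    (hsum : Summable fun t => η t * a t ^ 2) : liminf a atTop = 0 := by
  have hnots : ¬ Summable η := by
    intro h
    exact not_tendsto_atTop_of_tendsto_nhds h.hasSum.tendsto_sum_nat hdiv
  rw [liminf_eq]
  have hset : {c : ℝ | ∀ᶠ t in atTop, c ≤ a t} = Set.Iic 0 := by
    ext c
    simp only [Set.mem_setOf_eq, Set.mem_Iic]
    constructor
    · intro h
      by_contra hc
      push_neg at hc
      obtain ⟨N, hN⟩ := eventually_atTop.1 h
      have hS : Summable fun t => η (t + N) * a (t + N) ^ 2 :=
        (summable_nat_add_iff (f := fun t => η t * a t ^ 2) N).2 hsum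
      have hS2 : Summable fun t => c ^ 2 * η (t + N) := by
        refine Summable.of_nonneg_of_le
          (fun t => mul_nonneg (sq_nonneg c) (hη _).le) (fun t => ?_) hS
        have h1 : c ≤ a (t + N) := hN _ (Nat.le_add_left N t)
        have h2 : c ^ 2 ≤ a (t + N) ^ 2 := by nlinarith [ha (t + N)]
        nlinarith [hη (t + N)]
      have hS3 : Summable fun t => η (t + N) := by
        have := hS2.mul_left (c ^ 2)⁻¹
        simpa [mul_assoc, inv_mul_cancel_left₀ (by positivity : (c:ℝ) ^ 2 ≠ 0)] using this
      exact hnots ((summable_nat_add_iff (f := η) N).1 hS3)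
    · intro h
      exact Eventually.of_forall fun t => h.trans (ha t)
  rw [hset, csSup_Iic]

lemma sq_integrable {α E : Type*} {m0 : MeasurableSpace α} {μ : Measure α}
    [NormedAddCommGroup E] {f : α → E} (hf : MemLp f 2 μ) :
    Integrable (fun ω => ‖f ω‖ ^ 2) μ := by
  have := hf.integrable_norm_rpow two_ne_zero ENNReal.ofNat_ne_top
  simpa [ENNReal.toReal_ofNat, Real.rpow_natCast] using this

lemma inner_integrable {α E : Type*} {m0 : MeasurableSpace α} {μ : Measure α}
    [NormedAddCommGroup E] [InnerProductSpace ℝ E] {f g : α → E}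
    (hf : MemLp f 2 μ) (hg : MemLp g 2 μ) :
    Integrable (fun ω => (inner ℝ (f ω) (g ω) : ℝ)) μ := by
  have h := L2.integrable_inner (𝕜 := ℝ) (hf.toLp f) (hg.toLp g)
  refine (integrable_congr ?_).1 h
  filter_upwards [hf.coeFn_toLp, hg.coeFn_toLp] with ω h1 h2
  rw [h1, h2]

lemma mul_integrable {α : Type*} {m0 : MeasurableSpace α} {μ : Measure α} {f g : α → ℝ}
    (hf : MemLp f 2 μ) (hg : MemLp g 2 μ) :
    Integrable (fun ω => f ω * g ω) μ := by
  have h := inner_integrable hf hg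
  refine (integrable_congr ?_).1 h
  refine Eventually.of_forall fun ω => ?_
  simp [RCLike.inner_apply, conj_trivial, mul_comm]

set_option maxHeartbeats 1000000 in
/-- For SGD with unbiased stochastic gradients of bounded conditional variance,
Robbins–Monro stepsizes, an `L`-smooth loss bounded below, the weighted sum of
squared gradient norms is finite a.s.; hence `liminf_{t→∞} ‖∇f(θ_t)‖ = 0` a.s. -/
theorem sgd_liminf_gradient_zero {p : ℕ} {Ω : Type*} {m : MeasurableSpace Ω}
    (μ : Measure Ω) [IsProbabilityMeasure μ] (ℱ : Filtration ℕ m)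
    (f : EuclideanSpace ℝ (Fin p) → ℝ) (L : ℝ)
    (hdiff : Differentiable ℝ f)
    (hbdd : BddBelow (Set.range f))
    (hlip : ∀ x y, ‖gradient f x - gradient f y‖ ≤ L * ‖x - y‖)
    (θ : ℕ → Ω → EuclideanSpace ℝ (Fin p))
    (g : ℕ → Ω → EuclideanSpace ℝ (Fin p))
    (η : ℕ → ℝ) (σ : ℝ)
    (hθ : Adapted ℱ θ)
    (hg : ∀ t, StronglyMeasurable[ℱ (t + 1)] (g t))
    (hgL2 : ∀ t, MemLp (g t) 2 μ)
    (hmean : ∀ t, μ[g t | ℱ t] =ᵐ[μ] fun ω => gradient f (θ t ω))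
    (hvar : ∀ t, ∀ᵐ ω ∂μ,
      (μ[fun ω' => ‖g t ω' - gradient f (θ t ω')‖ ^ 2 | ℱ t]) ω ≤ σ ^ 2)
    (hη : ∀ t, 0 < η t)
    (hη_div : Tendsto (fun T => ∑ t ∈ Finset.range T, η t) atTop atTop)
    (hη_sq : Summable fun t => η t ^ 2)
    (hrec : ∀ t ω, θ (t + 1) ω = θ t ω - η t • g t ω) :
    ∀ᵐ ω ∂μ, liminf (fun t => ‖gradient f (θ t ω)‖) atTop = 0 := by
  classical
  set L' : ℝ := max L 0 with hL'def
  have hL'0 : 0 ≤ L' := le_max_right _ _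
  have hlip' : ∀ x y, ‖gradient f x - gradient f y‖ ≤ L' * ‖x - y‖ := fun x y =>
    (hlip x y).trans (mul_le_mul_of_nonneg_right (le_max_left _ _) (norm_nonneg _))
  have hgradcont : Continuous (gradient f) := by
    have h : LipschitzWith L'.toNNReal (gradient f) := by
      apply LipschitzWith.of_dist_le_mul
      intro a b
      rw [dist_eq_norm, dist_eq_norm]
      simpa [Real.coe_toNNReal L' hL'0] using hlip' a b
    exact h.continuous
  obtain ⟨B, hB⟩ : ∃ B : ℝ, ∀ x, B ≤ f x := ⟨hbdd.choose, fun x => hbdd.choose_spec ⟨x, rfl⟩⟩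
  obtain ⟨t₀, ht₀⟩ : ∃ t₀ : ℕ, ∀ t ≥ t₀, L' * η t ≤ 1 := by
    have h0 : Tendsto η atTop (nhds 0) := by
      have h1 := hη_sq.tendsto_atTop_zero
      have h2 : η = fun t => Real.sqrt (η t ^ 2) :=
        funext fun t => (Real.sqrt_sq (hη t).le).symm
      rw [h2]
      have := (Real.continuous_sqrt.tendsto 0).comp h1
      simpa [Function.comp_def] using this
    have h3 : ∀ᶠ t in atTop, η t < (L' + 1)⁻¹ :=
      h0.eventually_lt_const (by positivity)
    obtain ⟨t₀, ht₀⟩ := eventually_atTop.1 h3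
    refine ⟨t₀, fun t ht => ?_⟩
    have h4 : L' * η t ≤ L' * (L' + 1)⁻¹ :=
      mul_le_mul_of_nonneg_left (ht₀ t ht).le hL'0
    have h5 : L' * (L' + 1)⁻¹ ≤ 1 := by
      rw [← div_eq_mul_inv, div_le_one (by linarith)]; linarith
    linarith
  -- measurability and integrability of gradient process
  have hθm : ∀ t, StronglyMeasurable[ℱ t] fun ω => gradient f (θ t ω) :=
    fun t => hgradcont.comp_stronglyMeasurable (hθ t).stronglyMeasurable
  have hgrad2 : ∀ t, MemLp (fun ω => gradient f (θ t ω)) 2 μ := fun t =>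
    (memℒp_two_condexp (ℱ.le t) (hgL2 t)).ae_eq (hmean t)
  have hd2 : ∀ t, MemLp (fun ω => g t ω - gradient f (θ t ω)) 2 μ :=
    fun t => (hgL2 t).sub (hgrad2 t)
  have hd0 : ∀ t, μ[fun ω => g t ω - gradient f (θ t ω)|ℱ t] =ᵐ[μ] 0 := by
    intro t
    have heq : (fun ω => g t ω - gradient f (θ t ω))
        = g t - fun ω => gradient f (θ t ω) := rfl
    rw [heq]
    have h1 := condExp_sub (μ := μ) (m := ℱ t) ((hgL2 t).integrable one_le_two)
      ((hgrad2 t).integrable one_le_two)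
    have h2 : μ[(fun ω => gradient f (θ t ω))|ℱ t] = fun ω => gradient f (θ t ω) :=
      condExp_of_stronglyMeasurable (ℱ.le t) (hθm t) ((hgrad2 t).integrable one_le_two)
    filter_upwards [h1, hmean t] with ω hω1 hω2
    rw [hω1]
    simp [h2, hω2]
  have hXi2 : ∀ t, ∀ i : Fin p, MemLp (fun ω => gradient f (θ t ω) i) 2 μ :=
    fun t i => (EuclideanSpace.proj (𝕜 := ℝ) i).comp_memLp' (hgrad2 t)
  have hDi2 : ∀ t, ∀ i : Fin p, MemLp (fun ω => (g t ω - gradient f (θ t ω)) i) 2 μ :=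
    fun t i => (EuclideanSpace.proj (𝕜 := ℝ) i).comp_memLp' (hd2 t)
  -- conditional expectation of the inner-product cross term vanishes
  have hinner0 : ∀ t, μ[fun ω =>
      (inner ℝ (gradient f (θ t ω)) (g t ω - gradient f (θ t ω)) : ℝ)|ℱ t] =ᵐ[μ] 0 := by
    intro t
    have hXi : ∀ i : Fin p, StronglyMeasurable[ℱ t] fun ω => gradient f (θ t ω) i :=
      fun i => ((EuclideanSpace.proj (𝕜 := ℝ) i).continuous.comp_stronglyMeasurable (hθm t))
    have hdi : ∀ i : Fin p,
        μ[fun ω => (g t ω - gradient f (θ t ω)) i|ℱ t] =ᵐ[μ] 0 := by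
      intro i
      have h1 := condexp_comp_clm (ℱ.le t) (EuclideanSpace.proj (𝕜 := ℝ) i)
        ((hd2 t).integrable one_le_two)
      filter_upwards [h1, hd0 t] with ω hω1 hω2
      have h3 : (EuclideanSpace.proj (𝕜 := ℝ) i)
          ((μ[fun ω => g t ω - gradient f (θ t ω)|ℱ t]) ω) = 0 := by
        have hz : (μ[fun ω => g t ω - gradient f (θ t ω)|ℱ t]) ω = 0 := hω2
        rw [hz]; exact map_zero _
      exact hω1.trans h3
    have hterm : ∀ i : Fin p, μ[fun ω =>
        gradient f (θ t ω) i * (g t ω - gradient f (θ t ω)) i|ℱ t] =ᵐ[μ] 0 := by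
      intro i
      have hmulint : Integrable
          (fun ω => gradient f (θ t ω) i * (g t ω - gradient f (θ t ω)) i) μ :=
        mul_integrable (hXi2 t i) (hDi2 t i)
      have h1 := condExp_mul_of_stronglyMeasurable_left (hXi i) hmulint
        ((hDi2 t i).integrable one_le_two)
      filter_upwards [h1, hdi i] with ω hω1 hω2
      have h4 : ((fun ω => gradient f (θ t ω) i)
          * μ[fun ω => (g t ω - gradient f (θ t ω)) i|ℱ t]) ω = 0 := by
        have hz : (μ[fun ω => (g t ω - gradient f (θ t ω)) i|ℱ t]) ω = 0 := hω2
        rw [Pi.mul_apply, hz, mul_zero]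
      exact hω1.trans h4
    have hWeq : (fun ω =>
        (inner ℝ (gradient f (θ t ω)) (g t ω - gradient f (θ t ω)) : ℝ))
        = ∑ i : Fin p, fun ω => gradient f (θ t ω) i * (g t ω - gradient f (θ t ω)) i := by
      funext ω
      rw [Finset.sum_apply]
      rw [PiLp.inner_apply]
      exact Finset.sum_congr rfl fun i _ => by simp [mul_comm]
    rw [hWeq]
    have h2 := condExp_finsetSum (μ := μ) (m := ℱ t)
      (s := Finset.univ)
      (f := fun (i : Fin p) ω => gradient f (θ t ω) i * (g t ω - gradient f (θ t ω)) i)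
      (fun i _ => mul_integrable (hXi2 t i) (hDi2 t i))
    have h3 : ∀ᵐ ω ∂μ, ∀ i : Fin p, (μ[fun ω =>
        gradient f (θ t ω) i * (g t ω - gradient f (θ t ω)) i|ℱ t]) ω = 0 := by
      rw [ae_all_iff]
      intro i
      filter_upwards [hterm i] with ω hω
      exact hω
    filter_upwards [h2, h3] with ω hω2 hω3
    refine hω2.trans ?_
    rw [Finset.sum_apply, Pi.zero_apply]
    exact Finset.sum_eq_zero fun i _ => hω3 i
  -- pointwise descent inequality
  have hpt : ∀ t ω, f (θ (t + 1) ω) ≤ f (θ t ω)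
      + (L' * η t ^ 2 / 2 - η t) * ‖gradient f (θ t ω)‖ ^ 2
      + ((L' * η t ^ 2 - η t)
          * (inner ℝ (gradient f (θ t ω)) (g t ω - gradient f (θ t ω)) : ℝ)
        + L' * η t ^ 2 / 2 * ‖g t ω - gradient f (θ t ω)‖ ^ 2) := by
    intro t ω
    have h1 := descent_lemma f L' hL'0 hdiff hlip' (θ t ω) (θ (t + 1) ω)
    have h2 : θ (t + 1) ω - θ t ω = -(η t • g t ω) := by
      rw [hrec t ω]; abel
    rw [h2] at h1
    have h3 : (inner ℝ (gradient f (θ t ω)) (-(η t • g t ω)) : ℝ)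
        = -(η t * (inner ℝ (gradient f (θ t ω)) (g t ω) : ℝ)) := by
      rw [inner_neg_right, real_inner_smul_right]
    have h4 : ‖-(η t • g t ω)‖ ^ 2 = η t ^ 2 * ‖g t ω‖ ^ 2 := by
      rw [norm_neg, norm_smul]
      simp [mul_pow, sq_abs]
    rw [h3, h4] at h1
    have h5 : (inner ℝ (gradient f (θ t ω)) (g t ω) : ℝ)
        = ‖gradient f (θ t ω)‖ ^ 2
          + (inner ℝ (gradient f (θ t ω)) (g t ω - gradient f (θ t ω)) : ℝ) := by
      rw [← real_inner_self_eq_norm_sq, ← inner_add_right]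
      congr 1
      abel
    have h6 : ‖g t ω‖ ^ 2 = ‖gradient f (θ t ω)‖ ^ 2
        + 2 * (inner ℝ (gradient f (θ t ω)) (g t ω - gradient f (θ t ω)) : ℝ)
        + ‖g t ω - gradient f (θ t ω)‖ ^ 2 := by
      have h7 : g t ω = gradient f (θ t ω) + (g t ω - gradient f (θ t ω)) := by abel
      nth_rewrite 1 [h7]
      exact norm_add_sq_real _ _
    rw [h5, h6] at h1
    nlinarith [h1]
  have main : ∀ n : ℕ, ∀ᵐ ω ∂μ, ‖θ 0 ω‖ ≤ (n : ℝ) →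
      ∑' t, ENNReal.ofReal (η t * ‖gradient f (θ t ω)‖ ^ 2) < ⊤ := by
    intro n
    set A : Set Ω := {ω | ‖θ 0 ω‖ ≤ (n : ℝ)} with hAdef
    have hA0 : MeasurableSet[ℱ 0] A := by
      have h1 : A = (fun ω => ‖θ 0 ω‖) ⁻¹' Set.Iic (n : ℝ) := rfl
      rw [h1]
      exact (hθ 0).stronglyMeasurable.norm.measurable measurableSet_Iic
    have hAm : MeasurableSet A := ℱ.le 0 _ hA0
    have hAt : ∀ t, MeasurableSet[ℱ t] A := fun t => ℱ.mono (Nat.zero_le t) _ hA0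
    have hθA : ∀ t, MemLp (A.indicator (θ t)) 2 μ := by
      intro t
      induction t with
      | zero =>
        refine MemLp.of_bound
          ((((hθ 0).stronglyMeasurable.mono (ℱ.le 0)).indicator hAm).aestronglyMeasurable) (n : ℝ) ?_
        refine Eventually.of_forall fun ω => ?_
        by_cases hω : ω ∈ A
        · rw [Set.indicator_of_mem hω]; exact hω
        · rw [Set.indicator_of_notMem hω]
          simpa using (Nat.cast_nonneg n : (0 : ℝ) ≤ n)
      | succ t ih =>
        have heq : A.indicator (θ (t + 1))
            = fun ω => A.indicator (θ t) ω - η t • A.indicator (g t) ω := by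
          funext ω
          by_cases hω : ω ∈ A
          · rw [Set.indicator_of_mem hω, Set.indicator_of_mem hω,
              Set.indicator_of_mem hω, hrec t ω]
          · rw [Set.indicator_of_notMem hω, Set.indicator_of_notMem hω,
              Set.indicator_of_notMem hω]
            simp
        rw [heq]
        exact ih.sub (((hgL2 t).indicator hAm).const_smul (η t))
    have hbound_f : ∀ x : EuclideanSpace ℝ (Fin p),
        |f x| ≤ |B| + |f 0| + ‖gradient f 0‖ * ‖x‖ + L' / 2 * ‖x‖ ^ 2 := by
      intro x
      have h1 := descent_lemma f L' hL'0 hdiff hlip' 0 x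
      have h2 : (inner ℝ (gradient f 0) (x - 0) : ℝ) ≤ ‖gradient f 0‖ * ‖x‖ := by
        have h := real_inner_le_norm (gradient f 0) (x - 0)
        simpa using h
      have h3 := hB x
      have h4 : ‖x - (0 : EuclideanSpace ℝ (Fin p))‖ = ‖x‖ := by simp
      rw [h4] at h1
      rw [abs_le]
      constructor
      · nlinarith [neg_abs_le B, le_abs_self (f 0), abs_nonneg (f 0),
          mul_nonneg (norm_nonneg (gradient f 0)) (norm_nonneg x), sq_nonneg ‖x‖]
      · nlinarith [le_abs_self (f 0), abs_nonneg B, sq_nonneg ‖x‖]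
    have hfA : ∀ t, IntegrableOn (fun ω => f (θ t ω)) A μ := by
      intro t
      rw [← integrable_indicator_iff hAm]
      have hgbound := ((integrable_const (|B| + |f 0|)).add
          ((((hθA t).integrable one_le_two).norm.const_mul ‖gradient f 0‖))).add
          ((sq_integrable (hθA t)).const_mul (L' / 2))
      refine Integrable.mono' hgbound ?_ ?_
      · exact ((hdiff.continuous.comp_stronglyMeasurable
          ((hθ t).stronglyMeasurable.mono (ℱ.le t))).indicator hAm).aestronglyMeasurable
      · refine Eventually.of_forall fun ω => ?_
        simp only [Pi.add_apply]
        by_cases hω : ω ∈ A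
        · rw [Set.indicator_of_mem hω, Set.indicator_of_mem hω, Real.norm_eq_abs]
          have := hbound_f (θ t ω)
          linarith
        · rw [Set.indicator_of_notMem hω, Set.indicator_of_notMem hω]
          simp only [norm_zero, mul_zero, add_zero]
          positivity
    set S : ℕ → ℝ := fun t => ∫ ω in A, ‖gradient f (θ t ω)‖ ^ 2 ∂μ with hSdef
    set Fi : ℕ → ℝ := fun t => ∫ ω in A, f (θ t ω) ∂μ with hFidef
    have hSnn : ∀ t, 0 ≤ S t := fun t => integral_nonneg fun ω => sq_nonneg _
    have hgradOn : ∀ t, IntegrableOn (fun ω => ‖gradient f (θ t ω)‖ ^ 2) A μ :=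
      fun t => (sq_integrable (hgrad2 t)).integrableOn
    have hinnerOn : ∀ t, IntegrableOn (fun ω =>
        (inner ℝ (gradient f (θ t ω)) (g t ω - gradient f (θ t ω)) : ℝ)) A μ :=
      fun t => (inner_integrable (hgrad2 t) (hd2 t)).integrableOn
    have hdsqOn : ∀ t, IntegrableOn
        (fun ω => ‖g t ω - gradient f (θ t ω)‖ ^ 2) A μ :=
      fun t => (sq_integrable (hd2 t)).integrableOn
    have hWzero : ∀ t, ∫ ω in A,
        (inner ℝ (gradient f (θ t ω)) (g t ω - gradient f (θ t ω)) : ℝ) ∂μ = 0 := by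
      intro t
      rw [← setIntegral_condExp (ℱ.le t) (inner_integrable (hgrad2 t) (hd2 t)) (hAt t)]
      rw [integral_congr_ae (ae_restrict_of_ae (hinner0 t))]
      simp
    have hvarA : ∀ t, ∫ ω in A, ‖g t ω - gradient f (θ t ω)‖ ^ 2 ∂μ ≤ σ ^ 2 := by
      intro t
      rw [← setIntegral_condExp (ℱ.le t) (sq_integrable (hd2 t)) (hAt t)]
      have h2 : ∫ ω in A, (μ[fun ω' => ‖g t ω' - gradient f (θ t ω')‖ ^ 2|ℱ t]) ω ∂μ
          ≤ ∫ _ω in A, σ ^ 2 ∂μ :=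
        integral_mono_ae integrable_condExp.integrableOn
          (integrable_const _).integrableOn (ae_restrict_of_ae (hvar t))
      refine h2.trans ?_
      rw [setIntegral_const, smul_eq_mul]
      have h3 : μ.real A ≤ 1 := by
        simpa [Measure.real] using ENNReal.toReal_mono ENNReal.one_ne_top (prob_le_one (μ := μ) (s := A))
      nlinarith [sq_nonneg σ, (ENNReal.toReal_nonneg (a := μ A) : 0 ≤ μ.real A)]
    have hstep : ∀ t, Fi (t + 1) ≤ Fi t + (L' * η t ^ 2 / 2 - η t) * S t
        + L' * η t ^ 2 / 2 * σ ^ 2 := by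
      intro t
      have hmono : Fi (t + 1) ≤ ∫ ω in A, (f (θ t ω)
          + (L' * η t ^ 2 / 2 - η t) * ‖gradient f (θ t ω)‖ ^ 2
          + ((L' * η t ^ 2 - η t)
              * (inner ℝ (gradient f (θ t ω)) (g t ω - gradient f (θ t ω)) : ℝ)
            + L' * η t ^ 2 / 2 * ‖g t ω - gradient f (θ t ω)‖ ^ 2)) ∂μ :=
        integral_mono_ae (hfA (t + 1))
          (((hfA t).add ((hgradOn t).const_mul _)).add
            (((hinnerOn t).const_mul _).add ((hdsqOn t).const_mul _)))
          (Eventually.of_forall fun ω => hpt t ω)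
      have i3 : IntegrableOn (fun ω => (L' * η t ^ 2 / 2 - η t)
          * ‖gradient f (θ t ω)‖ ^ 2) A μ := (hgradOn t).const_mul _
      have i4 : IntegrableOn (fun ω => (L' * η t ^ 2 - η t)
          * (inner ℝ (gradient f (θ t ω)) (g t ω - gradient f (θ t ω)) : ℝ)) A μ :=
        (hinnerOn t).const_mul _
      have i5 : IntegrableOn (fun ω => L' * η t ^ 2 / 2
          * ‖g t ω - gradient f (θ t ω)‖ ^ 2) A μ := (hdsqOn t).const_mul _
      have i1 : IntegrableOn (fun ω => f (θ t ω) + (L' * η t ^ 2 / 2 - η t)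
          * ‖gradient f (θ t ω)‖ ^ 2) A μ := (hfA t).add i3
      have i2 : IntegrableOn (fun ω => (L' * η t ^ 2 - η t)
          * (inner ℝ (gradient f (θ t ω)) (g t ω - gradient f (θ t ω)) : ℝ)
          + L' * η t ^ 2 / 2 * ‖g t ω - gradient f (θ t ω)‖ ^ 2) A μ := i4.add i5
      rw [integral_add i1 i2, integral_add (hfA t) i3, integral_add i4 i5,
          integral_const_mul, integral_const_mul, integral_const_mul,
          hWzero t, mul_zero] at hmono
      have h8 : L' * η t ^ 2 / 2 * ∫ ω in A, ‖g t ω - gradient f (θ t ω)‖ ^ 2 ∂μ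
          ≤ L' * η t ^ 2 / 2 * σ ^ 2 :=
        mul_le_mul_of_nonneg_left (hvarA t) (by positivity)
      have h9 : Fi t = ∫ ω in A, f (θ t ω) ∂μ := rfl
      have h10 : S t = ∫ ω in A, ‖gradient f (θ t ω)‖ ^ 2 ∂μ := rfl
      rw [← h9, ← h10] at hmono
      linarith
    have hkey : ∀ t, t₀ ≤ t →
        η t * S t ≤ 2 * (Fi t - Fi (t + 1)) + L' * σ ^ 2 * η t ^ 2 := by
      intro t ht
      have h1 := hstep t
      have h2 := ht₀ t ht
      have h3 : (L' * η t ^ 2 / 2 - η t) * S t ≤ -(η t / 2) * S t := by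
        apply mul_le_mul_of_nonneg_right _ (hSnn t)
        nlinarith [hη t]
      nlinarith [hη t, hSnn t]
    have hFlb : ∀ t, -|B| ≤ Fi t := by
      intro t
      have h1 : ∫ _ω in A, B ∂μ ≤ Fi t :=
        integral_mono_ae (integrable_const _).integrableOn (hfA t)
          (Eventually.of_forall fun ω => hB _)
      rw [setIntegral_const, smul_eq_mul] at h1
      have h2 : μ.real A ≤ 1 := by
        simpa [Measure.real] using ENNReal.toReal_mono ENNReal.one_ne_top (prob_le_one (μ := μ) (s := A))
      nlinarith [neg_abs_le B, le_abs_self B, (ENNReal.toReal_nonneg (a := μ A) : 0 ≤ μ.real A),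
        abs_nonneg B, mul_nonneg (sub_nonneg.2 h2) (abs_nonneg B),
        mul_nonneg (measureReal_nonneg (μ := μ) (s := A)) (by linarith [neg_abs_le B] : (0:ℝ) ≤ B + |B|)]
    set K := ∑' t, η t ^ 2 with hKdef
    have hK0 : 0 ≤ K := tsum_nonneg fun t => sq_nonneg _
    have htel : ∀ T, t₀ ≤ T → ∑ t ∈ Finset.Ico t₀ T, η t * S t
        ≤ 2 * (Fi t₀ - Fi T) + L' * σ ^ 2 * ∑ t ∈ Finset.Ico t₀ T, η t ^ 2 := by
      intro T hT
      induction T, hT using Nat.le_induction with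
      | base => simp
      | succ T hT ih =>
        rw [Finset.sum_Ico_succ_top hT, Finset.sum_Ico_succ_top hT, mul_add]
        have h1 := hkey T hT
        linarith
    have hC : ∀ T, ∑ t ∈ Finset.range T, η t * S t
        ≤ (∑ t ∈ Finset.range t₀, η t * S t)
          + (2 * (Fi t₀ + |B|) + L' * σ ^ 2 * K) := by
      intro T
      have hrest : 0 ≤ 2 * (Fi t₀ + |B|) + L' * σ ^ 2 * K := by
        have h6 := hFlb t₀
        have h5 : 0 ≤ L' * σ ^ 2 * K := by positivity
        linarith
      rcases le_total T t₀ with h | h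
      · have h1 : ∑ t ∈ Finset.range T, η t * S t
            ≤ ∑ t ∈ Finset.range t₀, η t * S t :=
          Finset.sum_le_sum_of_subset_of_nonneg (Finset.range_subset_range.2 h)
            fun i _ _ => mul_nonneg (hη i).le (hSnn i)
        linarith
      · rw [← Finset.sum_range_add_sum_Ico _ h]
        have h1 := htel T h
        have h2 : ∑ t ∈ Finset.Ico t₀ T, η t ^ 2 ≤ K :=
          Summable.sum_le_tsum (Finset.Ico t₀ T) (fun i _ => sq_nonneg _) hη_sq
        have h3 := hFlb T
        have h4 : L' * σ ^ 2 * ∑ t ∈ Finset.Ico t₀ T, η t ^ 2 ≤ L' * σ ^ 2 * K :=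
          mul_le_mul_of_nonneg_left h2 (by positivity)
        linarith
    have hmeas' : ∀ t, Measurable
        (fun ω => ENNReal.ofReal (η t * ‖gradient f (θ t ω)‖ ^ 2)) := by
      intro t
      have hc : Continuous fun x : EuclideanSpace ℝ (Fin p) =>
          η t * ‖gradient f x‖ ^ 2 := by fun_prop
      exact (hc.measurable.comp ((hθ t).stronglyMeasurable.mono (ℱ.le t)).measurable).ennreal_ofReal
    have hofReal : ∀ t, ∫⁻ ω in A, ENNReal.ofReal (η t * ‖gradient f (θ t ω)‖ ^ 2) ∂μ
        = ENNReal.ofReal (η t * S t) := by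
      intro t
      rw [← ofReal_integral_eq_lintegral_ofReal
        (((sq_integrable (hgrad2 t)).const_mul (η t)).integrableOn)
        (Eventually.of_forall fun ω => mul_nonneg (hη t).le (sq_nonneg _))]
      rw [integral_const_mul]
    have hfinite : ∫⁻ ω in A,
        (∑' t, ENNReal.ofReal (η t * ‖gradient f (θ t ω)‖ ^ 2)) ∂μ ≠ ⊤ := by
      rw [lintegral_tsum fun t => (hmeas' t).aemeasurable]
      refine ne_top_of_le_ne_top (b := ENNReal.ofReal
        ((∑ t ∈ Finset.range t₀, η t * S t)
          + (2 * (Fi t₀ + |B|) + L' * σ ^ 2 * K))) ENNReal.ofReal_ne_top ?_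
      refine Summable.tsum_le_of_sum_le ENNReal.summable ?_
      intro s
      obtain ⟨T, hT⟩ := s.exists_nat_subset_range
      calc ∑ t ∈ s, ∫⁻ ω in A, ENNReal.ofReal (η t * ‖gradient f (θ t ω)‖ ^ 2) ∂μ
          = ∑ t ∈ s, ENNReal.ofReal (η t * S t) :=
            Finset.sum_congr rfl fun t _ => hofReal t
        _ = ENNReal.ofReal (∑ t ∈ s, η t * S t) :=
            (ENNReal.ofReal_sum_of_nonneg fun i _ =>
              mul_nonneg (hη i).le (hSnn i)).symm
        _ ≤ _ := ENNReal.ofReal_le_ofReal (le_trans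
            (Finset.sum_le_sum_of_subset_of_nonneg hT
              fun i _ _ => mul_nonneg (hη i).le (hSnn i)) (hC T))
    have hae := ae_lt_top' (AEMeasurable.ennreal_tsum
      fun t => (hmeas' t).aemeasurable) hfinite
    have hres := (ae_restrict_iff' hAm).1 hae
    filter_upwards [hres] with ω hω hmem
    exact hω hmem
  have hsummable : ∀ᵐ ω ∂μ, Summable fun t => η t * ‖gradient f (θ t ω)‖ ^ 2 := by
    have hall := ae_all_iff.2 main
    filter_upwards [hall] with ω hω
    have hfin := hω ⌈‖θ 0 ω‖⌉₊ (Nat.le_ceil _)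
    refine summable_of_sum_range_le
      (c := (∑' t, ENNReal.ofReal (η t * ‖gradient f (θ t ω)‖ ^ 2)).toReal)
      (fun t => mul_nonneg (hη t).le (sq_nonneg _)) ?_
    intro T
    have h1 : ∑ t ∈ Finset.range T, η t * ‖gradient f (θ t ω)‖ ^ 2
        = (∑ t ∈ Finset.range T,
            ENNReal.ofReal (η t * ‖gradient f (θ t ω)‖ ^ 2)).toReal := by
      rw [← ENNReal.ofReal_sum_of_nonneg
        (fun i _ => mul_nonneg (hη i).le (sq_nonneg _)),
        ENNReal.toReal_ofReal
          (Finset.sum_nonneg fun i _ => mul_nonneg (hη i).le (sq_nonneg _))]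
    rw [h1]
    exact ENNReal.toReal_mono hfin.ne (ENNReal.sum_le_tsum _)
  filter_upwards [hsummable] with ω hω
  exact liminf_eq_zero_of_summable _ η (fun t => norm_nonneg _) hη hη_div hω
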